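/- arXiv:2206.09563 — 9 statements merged into one kernel-verified Lean document; each statement's English description precedes it below -/
import Mathlib

section
/- Let N be a finite ground set, let f : 2^N → ℝ be non-negative, monotone and submodular, and let k ≥ 1 be an integer. Let S, O ⊆ N with |O| ≤ k, and suppose that for every o ∈ O \ S there exists a subset S_o ⊆ S such that Δ(o|S_o) < f(S_o)/k. Then f(O) ≤ 2 f(S). -/
/-! Adding the elements of `O \ S` to `S` one at a time, submodularity bounds each gain by the
gain `Δ(o|S) ≤ Δ(o|S_o) < f(S_o)/k ≤ f(S)/k`, and there are at most `k` of them. -/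

/-- A set function `f` on finite subsets of `α` is submodular if for all `A ⊆ B` and
`x ∉ B`, the marginal gain of `x` to `A` is at least the marginal gain of `x` to `B`. -/
def Submodular {α : Type*} [DecidableEq α] (f : Finset α → ℝ) : Prop :=
  ∀ A B : Finset α, A ⊆ B → ∀ x ∉ B, f (insert x A) - f A ≥ f (insert x B) - f B

open Finset

theorem Submodular.le_add_sum_marginal {α : Type*} [DecidableEq α] {f : Finset α → ℝ}
    (hsub : Submodular f) {S T : Finset α} (hST : Disjoint S T) :
    f (S ∪ T) ≤ f S + ∑ o ∈ T, (f (insert o S) - f S) := by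
  induction T using Finset.induction_on with
  | empty => simp
  | insert a T ha ih =>
    rw [disjoint_insert_right] at hST
    rw [union_insert, sum_insert ha]
    have hgain := hsub S (S ∪ T) subset_union_left a (by simp [ha, hST.1])
    linarith [ih hST.2]

theorem stmt1_general {α : Type*} [DecidableEq α] (f : Finset α → ℝ)
    (hnn : ∀ A : Finset α, 0 ≤ f A)
    (hmono : ∀ A B : Finset α, A ⊆ B → f A ≤ f B)
    (hsub : Submodular f)
    (k : ℕ)
    (S O : Finset α) (hO : O.card ≤ k)
    (h : ∀ o ∈ O \ S, ∃ So ⊆ S, f (insert o So) - f So < f So / k) :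
    f O ≤ 2 * f S := by
  have hgain : ∀ o ∈ O \ S, f (insert o S) - f S ≤ f S / k := by
    intro o ho
    obtain ⟨So, hSoS, hlt⟩ := h o ho
    have hsubmod := hsub So S hSoS o (mem_sdiff.mp ho).2
    have hmonok : f So / k ≤ f S / k := by gcongr; exact hmono _ _ hSoS
    linarith
  have hcard : ((O \ S).card : ℝ) / k ≤ 1 :=
    div_le_one_of_le₀ (by exact_mod_cast (card_le_card sdiff_subset).trans hO) k.cast_nonneg
  calc f O ≤ f (S ∪ (O \ S)) :=
        hmono _ _ (by rw [union_sdiff_self_eq_union]; exact subset_union_right)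
    _ ≤ f S + ∑ o ∈ O \ S, (f (insert o S) - f S) := hsub.le_add_sum_marginal disjoint_sdiff
    _ ≤ f S + ∑ _o ∈ O \ S, f S / k := by gcongr with o ho; exact hgain o ho
    _ = f S + ((O \ S).card / k) * f S := by rw [sum_const, nsmul_eq_mul]; ring
    _ ≤ 2 * f S := by linarith [mul_le_of_le_one_left (hnn S) hcard]

/-- Let `f` be non-negative, monotone and submodular, `k ≥ 1`, and
`S, O` sets with `|O| ≤ k`. If every `o ∈ O \ S` admits a subset `S_o ⊆ S` with
`Δ(o | S_o) < f(S_o)/k`, then `f(O) ≤ 2 f(S)`. -/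
theorem stmt1 {α : Type*} [DecidableEq α] (f : Finset α → ℝ)
    (hnn : ∀ A : Finset α, 0 ≤ f A)
    (hmono : ∀ A B : Finset α, A ⊆ B → f A ≤ f B)
    (hsub : Submodular f)
    (k : ℕ) (hk : 1 ≤ k)
    (S O : Finset α) (hO : O.card ≤ k)
    (h : ∀ o ∈ O \ S, ∃ So ⊆ S, f (insert o So) - f So < f So / k) :
    f O ≤ 2 * f S :=
  stmt1_general f hnn hmono hsub k S O hO h
end

section
/- Let N be a finite ground set, let f : 2^N → ℝ be non-negative and submodular, and let k ≥ 1 be an integer. Suppose S_0 ⊆ S_1 ⊆ … ⊆ S_k = S is a chain of subsets of N such that for each 0 ≤ i < k, S_{i+1} = S_i ∪ {x_{i+1}} for some x_{i+1} ∉ S_i satisfying f(S_{i+1}) − f(S_i) ≥ f(S_i)/k. Let S' = S \ S_0 (the k elements added along the chain). Then f(S_0) ≤ f(S)/2 and f(S') ≥ f(S) − f(S_0) ≥ f(S)/2. -/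
theorem le_of_forall_lt_le_succ {β : Type*} [Preorder β] {g : ℕ → β} {n : ℕ}
    (h : ∀ i < n, g i ≤ g (i + 1)) : g 0 ≤ g n := by
  induction n with
  | zero => rfl
  | succ n ih => exact (ih fun i hi => h i (by omega)).trans (h n n.lt_succ_self)

theorem pow_mul_le_of_forall_lt_mul_le {a : ℕ → ℝ} {c : ℝ} (hc : 0 ≤ c) {n : ℕ}
    (h : ∀ i < n, c * a i ≤ a (i + 1)) : c ^ n * a 0 ≤ a n := by
  induction n with
  | zero => simp
  | succ n ih =>
    calc c ^ (n + 1) * a 0 = c * (c ^ n * a 0) := by ring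
      _ ≤ c * a n := mul_le_mul_of_nonneg_left (ih fun i hi => h i (by omega)) hc
      _ ≤ a (n + 1) := h n n.lt_succ_self

theorem two_le_one_add_one_div_pow {n : ℕ} (hn : 1 ≤ n) : 2 ≤ (1 + 1 / (n : ℝ)) ^ n := by
  have hbernoulli := one_add_mul_le_pow (a := 1 / (n : ℝ))
    (by linarith [show (0 : ℝ) ≤ 1 / n by positivity]) n
  have hn' : (n : ℝ) ≠ 0 := by positivity
  rwa [mul_one_div_cancel hn', one_add_one_eq_two] at hbernoulli

namespace Submodular

variable {α : Type*} [DecidableEq α] {f : Finset α → ℝ}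

theorem add_le_of_disjoint (hf : Submodular f) {A C : Finset α} (h : Disjoint A C) :
    f (A ∪ C) + f ∅ ≤ f A + f C := by
  induction C using Finset.induction_on with
  | empty => simp
  | insert x C hxC ih =>
    rw [Finset.disjoint_insert_right] at h
    have hgain := hf C (A ∪ C) Finset.subset_union_right x (by simp [h.1, hxC])
    rw [Finset.union_insert]
    linarith [ih h.2]

theorem sub_le_sdiff (hf : Submodular f) (h₀ : 0 ≤ f ∅) {A B : Finset α} (hAB : A ⊆ B) :
    f B - f A ≤ f (B \ A) := by
  have := hf.add_le_of_disjoint (Finset.disjoint_sdiff (s := A) (t := B))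
  rw [Finset.union_sdiff_of_subset hAB] at this
  linarith

end Submodular

/-- Let `f` be non-negative and submodular, `k ≥ 1`, and let
`S 0 ⊆ S 1 ⊆ … ⊆ S k` be a chain where each step adds a single new element whose
gain is at least `f(S i)/k`. With `S' = S k \ S 0`, we have `f(S 0) ≤ f(S k)/2` and
`f(S') ≥ f(S k) − f(S 0) ≥ f(S k)/2`. -/
theorem stmt2 {α : Type*} [DecidableEq α] (f : Finset α → ℝ)
    (hnn : ∀ A : Finset α, 0 ≤ f A)
    (hsub : Submodular f)
    (k : ℕ) (hk : 1 ≤ k)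
    (S : ℕ → Finset α) (x : ℕ → α)
    (hstep : ∀ i < k, x (i + 1) ∉ S i ∧ S (i + 1) = insert (x (i + 1)) (S i) ∧
      f (S (i + 1)) - f (S i) ≥ f (S i) / k) :
    f (S 0) ≤ f (S k) / 2 ∧
      f (S k \ S 0) ≥ f (S k) - f (S 0) ∧
      f (S k) - f (S 0) ≥ f (S k) / 2 := by
  have hchain : S 0 ⊆ S k := le_of_forall_lt_le_succ fun i hi => by
    rw [(hstep i hi).2.1]
    exact Finset.subset_insert _ _
  have hgrowth : (1 + 1 / (k : ℝ)) ^ k * f (S 0) ≤ f (S k) :=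
    pow_mul_le_of_forall_lt_mul_le (a := fun i => f (S i)) (by positivity) fun i hi => by
      have hmul : (1 + 1 / (k : ℝ)) * f (S i) = f (S i) + f (S i) / k := by ring
      linarith [(hstep i hi).2.2]
  have hhalf : f (S 0) ≤ f (S k) / 2 := by
    nlinarith [two_le_one_add_one_div_pow hk, hnn (S 0)]
  exact ⟨hhalf, hsub.sub_le_sdiff (hnn ∅) hchain, by linarith⟩
end

section
/- Let N be a finite ground set with |N| = n ≥ 2, let f : 2^N → ℝ be monotone and submodular with f(∅) = 0 and f(N) > 0, and let k ≥ 1 be an integer. Let a ∈ N be an element maximizing f({x}) over x ∈ N. Suppose S_0 = {a} ⊆ S_1 ⊆ … ⊆ S_r is a chain of subsets of N such that for each 0 ≤ i < r, S_{i+1} = S_i ∪ {x_{i+1}} for some x_{i+1} ∉ S_i satisfying f(S_{i+1}) − f(S_i) ≥ f(S_i)/k. Then r ≤ log(n)/log(1 + 1/k) ≤ (k+1)·log(n), where log denotes the natural logarithm; in particular |S_r| ≤ (k+1)·log(n) + 1. -/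
open Real

theorem Submodular.apply_le_card_mul {α : Type*} [DecidableEq α] {f : Finset α → ℝ}
    (hsub : Submodular f) (hempty : f ∅ = 0) {c : ℝ} (hc : ∀ x, f {x} ≤ c) (T : Finset α) :
    f T ≤ T.card * c := by
  induction T using Finset.induction_on with
  | empty => simp [hempty]
  | @insert y T hy ih =>
    have hgain := hsub ∅ T (Finset.empty_subset T) y hy
    simp only [insert_empty_eq, hempty, sub_zero] at hgain
    rw [Finset.card_insert_of_notMem hy]
    push_cast
    linarith [hc y]

theorem Finset.card_of_insert_chain {α : Type*} [DecidableEq α] {S : ℕ → Finset α}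
    {x : ℕ → α} {r : ℕ} (h : ∀ i < r, x (i + 1) ∉ S i ∧ S (i + 1) = insert (x (i + 1)) (S i)) :
    ∀ i ≤ r, (S i).card = (S 0).card + i := by
  intro i hi
  induction i with
  | zero => rfl
  | succ j ih =>
    obtain ⟨hx, hins⟩ := h j hi
    rw [hins, Finset.card_insert_of_notMem hx, ih (by omega)]
    omega

theorem Real.inv_add_one_le_log_one_add_inv {k : ℝ} (hk : 0 < k) :
    (k + 1)⁻¹ ≤ log (1 + k⁻¹) := by
  have hk1 : (k + 1)⁻¹ = 1 - (1 + k⁻¹)⁻¹ := by field_simp; ring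
  exact hk1 ▸ one_sub_inv_le_log_of_pos (by positivity)

theorem Real.div_log_one_add_inv_le {k L : ℝ} (hk : 0 < k) (hL : 0 ≤ L) :
    L / log (1 + k⁻¹) ≤ (k + 1) * L := by
  have hlog := inv_add_one_le_log_one_add_inv hk
  have hpos : 0 < log (1 + k⁻¹) := lt_of_lt_of_le (by positivity) hlog
  rw [div_le_iff₀ hpos]
  have hone : 1 ≤ (k + 1) * log (1 + k⁻¹) := by
    rwa [inv_le_iff_one_le_mul₀ (by positivity), mul_comm] at hlog
  calc L ≤ L * ((k + 1) * log (1 + k⁻¹)) := le_mul_of_one_le_right hL hone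
    _ = (k + 1) * L * log (1 + k⁻¹) := by ring

/-- Let the ground set have `n ≥ 2` elements, `f` monotone and
submodular with `f ∅ = 0` and `f N > 0`, `k ≥ 1`, and `a` a maximizer of the singleton
value. If `S 0 = {a} ⊆ S 1 ⊆ … ⊆ S r` is a chain where each step adds a single new
element with gain at least `f(S i)/k`, then
`r ≤ log n / log(1 + 1/k) ≤ (k+1)·log n` (natural logarithm), and in particular
`|S r| ≤ (k+1)·log n + 1`. -/
theorem stmt4 {α : Type*} [Fintype α] [DecidableEq α] (f : Finset α → ℝ)
    (hmono : ∀ A B : Finset α, A ⊆ B → f A ≤ f B)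
    (hsub : Submodular f)
    (hempty : f ∅ = 0) (hpos : 0 < f (Finset.univ : Finset α))
    (n : ℕ) (hn : n = Fintype.card α) (hn2 : 2 ≤ n)
    (k : ℕ) (hk : 1 ≤ k)
    (a : α) (ha : ∀ x : α, f {x} ≤ f {a})
    (r : ℕ) (S : ℕ → Finset α) (x : ℕ → α) (hS0 : S 0 = {a})
    (hstep : ∀ i < r, x (i + 1) ∉ S i ∧ S (i + 1) = insert (x (i + 1)) (S i) ∧
      f (S (i + 1)) - f (S i) ≥ f (S i) / k) :
    (r : ℝ) ≤ Real.log n / Real.log (1 + 1 / (k : ℝ)) ∧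
      Real.log n / Real.log (1 + 1 / (k : ℝ)) ≤ ((k : ℝ) + 1) * Real.log n ∧
      ((S r).card : ℝ) ≤ ((k : ℝ) + 1) * Real.log n + 1 := by
  have hkpos : (0 : ℝ) < k := by exact_mod_cast hk
  have hnR : (2 : ℝ) ≤ n := by exact_mod_cast hn2
  have huniv : f Finset.univ ≤ n * f {a} := by
    simpa [hn] using hsub.apply_le_card_mul hempty ha Finset.univ
  have hfa : 0 < f {a} := pos_of_mul_pos_right (hpos.trans_le huniv) (by linarith)
  have hgrowth : (1 + 1 / (k : ℝ)) ^ r * f (S 0) ≤ f (S r) :=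
    geom_le (u := fun i => f (S i)) (by positivity) r fun i hi =>
      calc (1 + 1 / (k : ℝ)) * f (S i) = f (S i) + f (S i) / k := by ring
        _ ≤ f (S (i + 1)) := by linarith [(hstep i hi).2.2]
  rw [hS0] at hgrowth
  have hpow : (1 + 1 / (k : ℝ)) ^ r ≤ n :=
    le_of_mul_le_mul_right
      (hgrowth.trans ((hmono _ _ (Finset.subset_univ _)).trans huniv)) hfa
  have hlog : 0 < log (1 + 1 / (k : ℝ)) := log_pos (by simp [hkpos])
  have hr : (r : ℝ) ≤ log n / log (1 + 1 / (k : ℝ)) := by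
    rw [le_div_iff₀ hlog, ← pow_le_iff_le_log (by positivity) (by positivity)]
    exact hpow
  have hlog_div : log n / log (1 + 1 / (k : ℝ)) ≤ (k + 1) * log n := by
    simpa only [one_div] using div_log_one_add_inv_le hkpos (log_nonneg (by linarith))
  have hcard : (S r).card = r + 1 := by
    rw [Finset.card_of_insert_chain (fun i hi => ⟨(hstep i hi).1, (hstep i hi).2.1⟩) r le_rfl,
      hS0, Finset.card_singleton, add_comm]
  refine ⟨hr, hlog_div, ?_⟩
  rw [hcard]
  push_cast
  linarith
end

section
/- Fix a finite ground set N, an injective list L = (e_1, …, e_n) enumerating N, a set function f : 2^N → ℝ, and an integer k ≥ 1. For a nonempty subset X ⊆ N, define LTC(X) as follows: let a be the first element of L among those x ∈ X attaining the maximum of f({x}) over X; initialize S = {a}; then process the elements of L in order, and for each element x with x ∈ X, update S ← S ∪ {x} if f(S ∪ {x}) − f(S) ≥ f(S)/k; output the final S. Then LTC satisfies the randomized consistency property for this fixed order: if A and B are disjoint subsets of N with A nonempty, and for every b ∈ B it holds that LTC(A ∪ {b}) = LTC(A), then LTC(A ∪ B) = LTC(A). -/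
open scoped Classical in
/-- The `LinearTimeCardinality` (LTC) procedure, for a fixed order `L` of the ground set.
For a nonempty `X`, it starts from the first element of `L` among the `X`-maximizers of
the singleton value, then scans `L` in order and adds each `x ∈ X` whose marginal gain
to the current solution `S` is at least `f(S)/k`. -/
noncomputable def LTC {α : Type*} [DecidableEq α] (L : List α) (f : Finset α → ℝ) (k : ℕ)
    (X : Finset α) : Finset α :=
  let S0 : Finset α :=
    match L.find? (fun x => decide (x ∈ X ∧ ∀ y ∈ X, f {y} ≤ f {x})) with
    | some a => {a}
    | none => ∅
  L.foldl (fun S x => if x ∈ X ∧ f S / k ≤ f (insert x S) - f S then insert x S else S) S0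

/-!
A scan step on the input set `X` looks at `X` only through the test `x ∈ X`. If
`LTC (insert b A) = LTC A ⊆ A` with `b ∉ A`, then `b` is never accepted while scanning
`insert b A`, so that scan runs in lockstep with the scan of `A`; and the first maximizer of
`insert b A` lies in `A`, hence is the first maximizer of `A`. Scanning `A ∪ B`, every `b ∈ B`
met is rejected for the same reason, so this scan too runs in lockstep with the scan of `A`,
from the same first maximizer.
-/

namespace LTC

variable {α : Type*} [DecidableEq α]

section Scan

variable (f : Finset α → ℝ) (k : ℕ)

noncomputable def step (X S : Finset α) (x : α) : Finset α :=
  if x ∈ X ∧ f S / k ≤ f (insert x S) - f S then insert x S else S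

noncomputable def scan (X : Finset α) (ℓ : List α) (S : Finset α) : Finset α :=
  ℓ.foldl (step f k X) S

variable {f k}

theorem step_congr {X Y S : Finset α} {x : α} (h : x ∈ X ↔ x ∈ Y) :
    step f k X S x = step f k Y S x := by
  simp only [step, h]

theorem subset_step (X S : Finset α) (x : α) : S ⊆ step f k X S x := by
  unfold step
  split_ifs
  exacts [Finset.subset_insert x S, subset_rfl]

theorem step_subset {X S : Finset α} (hS : S ⊆ X) (x : α) : step f k X S x ⊆ X := by
  unfold step
  split_ifs with h
  exacts [Finset.insert_subset h.1 hS, hS]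

theorem step_insert_eq {X S : Finset α} {b x : α} (h : b ∉ step f k (insert b X) S x) :
    step f k (insert b X) S x = step f k X S x := by
  by_cases hxb : x = b
  · subst hxb
    by_cases hxX : x ∈ X
    · rw [Finset.insert_eq_of_mem hxX]
    · simp only [step, Finset.mem_insert_self, true_and, hxX, false_and, if_false] at h ⊢
      split_ifs at h ⊢
      · exact absurd (Finset.mem_insert_self x S) h
      · rfl
  · exact step_congr (by simp [hxb])

theorem subset_scan (X : Finset α) (ℓ : List α) (S : Finset α) : S ⊆ scan f k X ℓ S := by
  induction ℓ generalizing S with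
  | nil => exact subset_rfl
  | cons x t ih => exact (subset_step X S x).trans (ih _)

theorem scan_subset {X : Finset α} (ℓ : List α) {S : Finset α} (hS : S ⊆ X) :
    scan f k X ℓ S ⊆ X := by
  induction ℓ generalizing S with
  | nil => exact hS
  | cons x t ih => exact ih (step_subset hS x)

theorem scan_cons (X : Finset α) (x : α) (ℓ : List α) (S : Finset α) :
    scan f k X (x :: ℓ) S = scan f k X ℓ (step f k X S x) := rfl

theorem scan_union_eq {X B : Finset α} (ℓ : List α) {S : Finset α}
    (hB : ∀ b ∈ B, b ∉ scan f k (insert b X) ℓ S) : scan f k (X ∪ B) ℓ S = scan f k X ℓ S := by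
  induction ℓ generalizing S with
  | nil => rfl
  | cons x t ih =>
    have hstep : ∀ b ∈ B, step f k (insert b X) S x = step f k X S x := fun b hb =>
      step_insert_eq fun h => hB b hb (subset_scan _ t _ h)
    have hunion : step f k (X ∪ B) S x = step f k X S x := by
      by_cases hx : x ∈ B
      · rw [← hstep x hx]
        exact step_congr (by simp [hx])
      · exact step_congr (by simp [hx])
    rw [scan_cons, scan_cons, hunion]
    refine ih fun b hb => ?_
    simpa only [scan_cons, hstep b hb] using hB b hb

end Scan

section FirstMax

variable (L : List α) (f : Finset α → ℝ)

noncomputable def firstMax (X : Finset α) : Option α :=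
  L.find? fun x => decide (x ∈ X ∧ ∀ y ∈ X, f {y} ≤ f {x})

variable {L f}

theorem firstMax_spec {X : Finset α} {a : α} (h : firstMax L f X = some a) :
    a ∈ X ∧ ∀ y ∈ X, f {y} ≤ f {a} := by
  simpa using List.find?_some h

theorem firstMax_eq_none_iff (hL : ∀ x, x ∈ L) {X : Finset α} :
    firstMax L f X = none ↔ X = ∅ := by
  refine ⟨fun h => ?_, fun h => by simp [firstMax, h]⟩
  by_contra hX
  obtain ⟨m, hm, hmax⟩ := X.exists_max_image (fun x => f {x}) (Finset.nonempty_iff_ne_empty.mpr hX)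
  exact List.find?_eq_none.mp h m (hL m) (by simpa using ⟨hm, hmax⟩)

/-- Since `a ∈ X` dominates `Y`, every maximizer over `X` is also one over `Y`, so none of them
comes before `a`. -/
theorem firstMax_eq_of_subset {X Y : Finset α} (hXY : X ⊆ Y) {a : α}
    (h : firstMax L f Y = some a) (ha : a ∈ X) : firstMax L f X = some a := by
  obtain ⟨-, hmax⟩ := firstMax_spec h
  obtain ⟨-, as, bs, hL, hbefore⟩ := List.find?_eq_some_iff_append.mp h
  refine List.find?_eq_some_iff_append.mpr ⟨by simpa using ⟨ha, fun y hy => hmax y (hXY hy)⟩,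
    as, bs, hL, fun x hx => ?_⟩
  have hx' := hbefore x hx
  simp only [Bool.not_eq_true', decide_eq_false_iff_not, not_and, not_forall, not_le] at hx' ⊢
  intro hxX
  obtain ⟨y, hyY, hy⟩ := hx' (hXY hxX)
  exact ⟨a, ha, hy.trans_le (hmax y hyY)⟩

theorem firstMax_union_eq (hL : ∀ x, x ∈ L) {A B : Finset α}
    (hB : ∀ b ∈ B, firstMax L f (insert b A) = firstMax L f A) :
    firstMax L f (A ∪ B) = firstMax L f A := by
  cases h : firstMax L f (A ∪ B) with
  | none =>
    rw [firstMax_eq_none_iff hL, Finset.union_eq_empty] at h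
    rw [(firstMax_eq_none_iff hL).mpr h.1]
  | some a =>
    rcases Finset.mem_union.mp (firstMax_spec h).1 with haA | haB
    · exact (firstMax_eq_of_subset Finset.subset_union_left h haA).symm
    · rw [← hB a haB]
      refine (firstMax_eq_of_subset ?_ h (Finset.mem_insert_self a A)).symm
      exact Finset.insert_subset (Finset.mem_union_right A haB) Finset.subset_union_left

end FirstMax

section Consistency

theorem eq_scan (L : List α) (f : Finset α → ℝ) (k : ℕ) (X : Finset α) :
    LTC L f k X = scan f k X L ((firstMax L f X).elim ∅ singleton) := by
  unfold LTC scan firstMax step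
  cases L.find? _ <;> rfl

variable {L : List α} {f : Finset α → ℝ} {k : ℕ}

theorem subset {X : Finset α} : LTC L f k X ⊆ X := by
  rw [eq_scan]
  refine scan_subset L ?_
  cases h : firstMax L f X with
  | none => exact Finset.empty_subset X
  | some a => exact Finset.singleton_subset_iff.mpr (firstMax_spec h).1

theorem mem_of_firstMax {X : Finset α} {a : α} (h : firstMax L f X = some a) :
    a ∈ LTC L f k X := by
  rw [eq_scan, h]
  exact subset_scan X L {a} (Finset.mem_singleton_self a)

theorem firstMax_insert_eq (hL : ∀ x, x ∈ L) {A : Finset α} {b : α}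
    (h : LTC L f k (insert b A) = LTC L f k A) : firstMax L f (insert b A) = firstMax L f A := by
  obtain ⟨a, ha⟩ := Option.ne_none_iff_exists'.mp
    ((firstMax_eq_none_iff hL).not.mpr (Finset.insert_ne_empty b A))
  have haA : a ∈ A := LTC.subset (h ▸ mem_of_firstMax (k := k) ha)
  rw [ha, firstMax_eq_of_subset (Finset.subset_insert b A) ha haA]

end Consistency

end LTC

theorem stmt5_general {α : Type*} [DecidableEq α] (L : List α)
    (hall : ∀ x : α, x ∈ L)
    (f : Finset α → ℝ) (k : ℕ)
    (A B : Finset α) (hdisj : Disjoint A B)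
    (hB : ∀ b ∈ B, LTC L f k (insert b A) = LTC L f k A) :
    LTC L f k (A ∪ B) = LTC L f k A := by
  have hmax : ∀ b ∈ B, LTC.firstMax L f (insert b A) = LTC.firstMax L f A :=
    fun b hb => LTC.firstMax_insert_eq hall (hB b hb)
  rw [LTC.eq_scan, LTC.eq_scan, LTC.firstMax_union_eq hall hmax]
  refine LTC.scan_union_eq L fun b hb hmem => Finset.disjoint_left.mp hdisj ?_ hb
  rw [← hmax b hb, ← LTC.eq_scan, hB b hb] at hmem
  exact LTC.subset hmem

/-- For a fixed injective list `L` enumerating the ground set, the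
procedure `LTC` satisfies the randomized consistency property: if `A` and `B` are
disjoint with `A` nonempty and `LTC(A ∪ {b}) = LTC(A)` for every `b ∈ B`, then
`LTC(A ∪ B) = LTC(A)`. -/
theorem stmt5 {α : Type*} [Fintype α] [DecidableEq α] (L : List α)
    (hnd : L.Nodup) (hall : ∀ x : α, x ∈ L)
    (f : Finset α → ℝ) (k : ℕ) (hk : 1 ≤ k)
    (A B : Finset α) (hdisj : Disjoint A B) (hA : A.Nonempty)
    (hB : ∀ b ∈ B, LTC L f k (insert b A) = LTC L f k A) :
    LTC L f k (A ∪ B) = LTC L f k A :=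
  stmt5_general L hall f k A B hdisj hB
end

section
/- Let N be a finite ground set, let f : 2^N → ℝ be monotone and submodular, let k ≥ 1 be an integer, and let τ ≥ 0 be a real number. Let Q, T ⊆ N with |Q| ≤ k, and suppose that for every q ∈ Q \ T the marginal gain satisfies Δ(q|T) < τ. Then f(Q ∪ T) − f(T) ≤ k·τ; in particular f(Q) ≤ f(T) + k·τ. -/
theorem Submodular.union_sub_le_sum {α : Type*} [DecidableEq α] {f : Finset α → ℝ}
    (hsub : Submodular f) (T : Finset α) {S : Finset α} (hST : Disjoint S T) :
    f (S ∪ T) - f T ≤ ∑ x ∈ S, (f (insert x T) - f T) := by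
  induction S using Finset.induction_on with
  | empty => simp
  | @insert a S haS ih =>
    rw [Finset.disjoint_insert_left] at hST
    have haST : a ∉ S ∪ T := by simp [haS, hST.1]
    have hgain : f (insert a (S ∪ T)) - f (S ∪ T) ≤ f (insert a T) - f T :=
      hsub T (S ∪ T) Finset.subset_union_right a haST
    rw [Finset.insert_union, Finset.sum_insert haS]
    linarith [ih hST.2]

theorem stmt9_general {α : Type*} [DecidableEq α] (f : Finset α → ℝ)
    (hmono : ∀ A B : Finset α, A ⊆ B → f A ≤ f B)
    (hsub : Submodular f)
    (k : ℕ) (τ : ℝ) (hτ : 0 ≤ τ)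
    (Q T : Finset α) (hQ : Q.card ≤ k)
    (h : ∀ q ∈ Q \ T, f (insert q T) - f T < τ) :
    f (Q ∪ T) - f T ≤ k * τ ∧ f Q ≤ f T + k * τ := by
  have hgain : f (Q ∪ T) - f T ≤ k * τ :=
    calc f (Q ∪ T) - f T
        = f (Q \ T ∪ T) - f T := by rw [Finset.sdiff_union_self_eq_union]
      _ ≤ ∑ q ∈ Q \ T, (f (insert q T) - f T) :=
          hsub.union_sub_le_sum T Finset.sdiff_disjoint
      _ ≤ (Q \ T).card * τ := by
          simpa using Finset.sum_le_card_nsmul _ _ τ fun q hq => (h q hq).le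
      _ ≤ k * τ := by
          gcongr
          exact_mod_cast (Finset.card_le_card Finset.sdiff_subset).trans hQ
  exact ⟨hgain, by linarith [hmono Q (Q ∪ T) Finset.subset_union_left]⟩

/-- Let `f` be monotone and submodular, `k ≥ 1`, `τ ≥ 0`, and
`Q, T` with `|Q| ≤ k`. If every `q ∈ Q \ T` has marginal gain `Δ(q|T) < τ`, then
`f(Q ∪ T) − f(T) ≤ k·τ`; in particular `f(Q) ≤ f(T) + k·τ`. -/
theorem stmt9 {α : Type*} [DecidableEq α] (f : Finset α → ℝ)
    (hmono : ∀ A B : Finset α, A ⊆ B → f A ≤ f B)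
    (hsub : Submodular f)
    (k : ℕ) (hk : 1 ≤ k) (τ : ℝ) (hτ : 0 ≤ τ)
    (Q T : Finset α) (hQ : Q.card ≤ k)
    (h : ∀ q ∈ Q \ T, f (insert q T) - f T < τ) :
    f (Q ∪ T) - f T ≤ k * τ ∧ f Q ≤ f T + k * τ :=
  stmt9_general f hmono hsub k τ hτ Q T hQ h
end

section
/- Let N be a finite ground set, let f : 2^N → ℝ be non-negative, monotone and submodular with f(∅) = 0, let k ≥ 1 be an integer, let ε ∈ (0, 1) and α ∈ (0, 1], and let O ⊆ N with |O| ≤ k. Let Γ be a real number with Γ ≤ f(O) ≤ Γ/α, and define thresholds τ_j = (Γ/(αk))·(1 − ε)^{j−1} for j = 1, …, J. Suppose ∅ = S_0 ⊆ S_1 ⊆ … ⊆ S_J = S is a chain of subsets of N such that: (i) for every j, the elements of S_j \ S_{j−1} can be ordered so that each is added with marginal gain at least τ_j with respect to the set of all previously added elements; (ii) for every j ≥ 2 with S_j ≠ S_{j−1}, every o ∈ O \ S_{j−1} satisfies Δ(o|S_{j−1}) < τ_{j−1}; and (iii) |S| = k. Then f(S) ≥ (1 − 1/e − ε)·f(O).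 -/
namespace Submodular

variable {α : Type*} [DecidableEq α] {f : Finset α → ℝ}

theorem sub_le_sum_sdiff (hf : Submodular f) (T R : Finset α) :
    f (T ∪ R) - f T ≤ ∑ o ∈ R \ T, (f (insert o T) - f T) := by
  induction R using Finset.induction_on with
  | empty => simp
  | @insert x R hxR ih =>
    by_cases hxT : x ∈ T
    · rwa [Finset.union_insert, Finset.insert_eq_of_mem (Finset.mem_union_left R hxT),
        Finset.insert_sdiff_of_mem _ hxT]
    · have hx : x ∉ T ∪ R := by simp [hxT, hxR]
      have hx' : x ∉ R \ T := fun h => hxR (Finset.mem_sdiff.mp h).1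
      rw [Finset.union_insert, Finset.insert_sdiff_of_notMem _ hxT, Finset.sum_insert hx']
      linarith [hf T (T ∪ R) Finset.subset_union_left x hx]

theorem sub_le_card_mul_of_marginal_lt (hf : Submodular f) (hmono : Monotone f)
    {O B T : Finset α} {t : ℝ} (ht : 0 ≤ t) (hBT : B ⊆ T)
    (hO : ∀ o ∈ O, o ∉ B → f (insert o B) - f B < t) :
    f O - f T ≤ O.card * t := by
  have hmarginal : ∀ o ∈ O \ T, f (insert o T) - f T ≤ t := by
    intro o ho
    obtain ⟨hoO, hoT⟩ := Finset.mem_sdiff.mp ho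
    linarith [hf B T hBT o hoT, hO o hoO (fun h => hoT (hBT h))]
  calc f O - f T ≤ f (T ∪ O) - f T := by gcongr; exact hmono Finset.subset_union_right
    _ ≤ ∑ o ∈ O \ T, (f (insert o T) - f T) := hf.sub_le_sum_sdiff T O
    _ ≤ (O \ T).card * t := by simpa using Finset.sum_le_sum hmarginal
    _ ≤ O.card * t := by gcongr; exact Finset.sdiff_subset

end Submodular

section Rounds

variable {α : Type*} [DecidableEq α] {f : Finset α → ℝ} {v c : ℝ}

theorem sub_union_toFinset_le_pow_mul {τ : ℝ} (hc : 0 ≤ 1 - c) :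
    ∀ (B : Finset α) (l : List α), (∀ T, B ⊆ T → c * (v - f T) ≤ τ) →
      (∀ i : Fin l.length, τ ≤ f (insert (l.get i) (B ∪ (l.take i).toFinset)) -
        f (B ∪ (l.take i).toFinset)) →
      v - f (B ∪ l.toFinset) ≤ (1 - c) ^ l.length * (v - f B)
  | B, [], _, _ => by simp
  | B, x :: l, hτ, hgain => by
    have hx : τ ≤ f (insert x B) - f B := by simpa using hgain ⟨0, by simp⟩
    have hrest := sub_union_toFinset_le_pow_mul hc (insert x B) l
      (fun T hT => hτ T ((Finset.subset_insert x B).trans hT))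
      (fun i => by simpa [Finset.insert_union] using hgain i.succ)
    have hstep : v - f (insert x B) ≤ (1 - c) * (v - f B) := by
      linarith [hτ B le_rfl]
    rw [List.toFinset_cons, Finset.union_insert, ← Finset.insert_union, List.length_cons,
      pow_succ]
    calc v - f (insert x B ∪ l.toFinset) ≤ (1 - c) ^ l.length * (v - f (insert x B)) := hrest
      _ ≤ (1 - c) ^ l.length * ((1 - c) * (v - f B)) := by gcongr
      _ = _ := by ring

theorem sub_le_pow_card_mul_of_rounds (hc : 0 ≤ 1 - c) (J : ℕ) (τ : ℕ → ℝ) (S : ℕ → Finset α)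
    (hS0 : S 0 = ∅)
    (hchain : ∀ j, 1 ≤ j → j ≤ J → S (j - 1) ⊆ S j)
    (hadd : ∀ j, 1 ≤ j → j ≤ J → ∃ l : List α, l.Nodup ∧ l.toFinset = S j \ S (j - 1) ∧
      ∀ i : Fin l.length,
        τ j ≤ f (insert (l.get i) (S (j - 1) ∪ (l.take (i : ℕ)).toFinset)) -
          f (S (j - 1) ∪ (l.take (i : ℕ)).toFinset))
    (hround : ∀ j, 1 ≤ j → j ≤ J → S j ≠ S (j - 1) →
      ∀ T, S (j - 1) ⊆ T → c * (v - f T) ≤ τ j) :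
    v - f (S J) ≤ (1 - c) ^ (S J).card * (v - f ∅) := by
  induction J with
  | zero => simp [hS0]
  | succ n ih =>
    have ih := ih (fun j h1 h2 => hchain j h1 (by omega)) (fun j h1 h2 => hadd j h1 (by omega))
      (fun j h1 h2 => hround j h1 (by omega))
    by_cases hne : S (n + 1) = S n
    · rwa [hne]
    obtain ⟨l, hnd, hl, hgain⟩ := hadd (n + 1) (by omega) le_rfl
    have hsub := hchain (n + 1) (by omega) le_rfl
    simp only [Nat.add_sub_cancel] at hl hgain hsub
    have hunion : S n ∪ l.toFinset = S (n + 1) := by rw [hl, Finset.union_sdiff_of_subset hsub]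
    have hcard : (S (n + 1)).card = l.length + (S n).card := by
      rw [← List.toFinset_card_of_nodup hnd, hl, Finset.card_sdiff_add_card_eq_card hsub]
    have hlist := sub_union_toFinset_le_pow_mul hc (S n) l
      (hround (n + 1) (by omega) le_rfl hne) hgain
    rw [hunion] at hlist
    calc v - f (S (n + 1)) ≤ (1 - c) ^ l.length * (v - f (S n)) := hlist
      _ ≤ (1 - c) ^ l.length * ((1 - c) ^ (S n).card * (v - f ∅)) := by gcongr
      _ = _ := by rw [hcard, pow_add, mul_assoc]

end Rounds

theorem one_sub_div_pow_le_inv_exp_one_add {ε : ℝ} (hε0 : 0 ≤ ε) (hε1 : ε ≤ 1) {k : ℕ}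
    (hk : 1 - ε ≤ k) : (1 - (1 - ε) / k) ^ k ≤ 1 / Real.exp 1 + ε := by
  have hconv := convexOn_exp.2 (Set.mem_univ (-1 : ℝ)) (Set.mem_univ 0)
    (sub_nonneg.2 hε1) hε0 (by ring)
  simp only [smul_eq_mul, mul_zero, add_zero, Real.exp_zero, mul_one] at hconv
  have hinv : 0 ≤ ε * (1 / Real.exp 1) := by positivity
  calc (1 - (1 - ε) / k) ^ k ≤ Real.exp (-(1 - ε)) := Real.one_sub_div_pow_le_exp_neg hk
    _ = Real.exp ((1 - ε) * -1) := by ring_nf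
    _ ≤ (1 - ε) * Real.exp (-1) + ε := hconv
    _ ≤ 1 / Real.exp 1 + ε := by rw [Real.exp_neg, ← one_div]; linarith

theorem thresholdGreedy_round_bound {α : Type*} [DecidableEq α] {f : Finset α → ℝ}
    (hnn : ∀ A : Finset α, 0 ≤ f A) (hmono : Monotone f) (hsub : Submodular f)
    {k : ℕ} {ε a : ℝ} (hε0 : 0 ≤ ε) (hε1 : ε ≤ 1) {O : Finset α} (hO : O.card ≤ k) {Γ : ℝ}
    (hΓ2 : f O ≤ Γ / a) {J : ℕ} {τ : ℕ → ℝ}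
    (hτ : ∀ j, 1 ≤ j → j ≤ J → τ j = Γ / (a * k) * (1 - ε) ^ (j - 1)) {S : ℕ → Finset α}
    (hthresh : ∀ j, 2 ≤ j → j ≤ J → S j ≠ S (j - 1) →
      ∀ o ∈ O, o ∉ S (j - 1) →
        f (insert o (S (j - 1))) - f (S (j - 1)) < τ (j - 1))
    {j : ℕ} (hj1 : 1 ≤ j) (hjJ : j ≤ J) (hne : S j ≠ S (j - 1)) {T : Finset α}
    (hT : S (j - 1) ⊆ T) :
    (1 - ε) / k * (f O - f T) ≤ τ j := by
  have hΓ0 : 0 ≤ Γ / a := (hnn O).trans hΓ2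
  have h1ε : 0 ≤ 1 - ε := by linarith
  rcases hj1.eq_or_lt with rfl | hj2
  · calc (1 - ε) / k * (f O - f T) ≤ (1 - ε) / k * (Γ / a) := by
          gcongr; linarith [hnn T]
      _ ≤ 1 / k * (Γ / a) := by gcongr; linarith
      _ = τ 1 := by rw [hτ 1 le_rfl hjJ]; ring
  · have hτ_prev : τ (j - 1) = Γ / (a * k) * (1 - ε) ^ (j - 2) := hτ (j - 1) (by omega) (by omega)
    have hτ_succ : τ j = (1 - ε) * τ (j - 1) := by
      rw [hτ j hj1 hjJ, hτ_prev, show j - 1 = j - 2 + 1 by omega, pow_succ]; ring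
    have hτ_nonneg : 0 ≤ τ (j - 1) := by rw [hτ_prev, ← div_div]; positivity
    have hgap : f O - f T ≤ k * τ (j - 1) :=
      (hsub.sub_le_card_mul_of_marginal_lt hmono hτ_nonneg hT (hthresh j hj2 hjJ hne)).trans
        (by gcongr)
    calc (1 - ε) / k * (f O - f T) ≤ (1 - ε) / k * (k * τ (j - 1)) := by gcongr
      _ = (1 - ε) * τ (j - 1) * (k / k) := by ring
      _ ≤ (1 - ε) * τ (j - 1) * 1 := by gcongr; exact div_self_le_one _
      _ = τ j := by rw [mul_one, hτ_succ]

theorem stmt10_general {α : Type*} [DecidableEq α] (f : Finset α → ℝ)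
    (hnn : ∀ A : Finset α, 0 ≤ f A)
    (hmono : ∀ A B : Finset α, A ⊆ B → f A ≤ f B)
    (hsub : Submodular f) (hf0 : f ∅ = 0)
    (k : ℕ) (hk : 1 ≤ k)
    (ε : ℝ) (hε : 0 < ε) (hε1 : ε < 1)
    (a : ℝ)
    (O : Finset α) (hO : O.card ≤ k)
    (Γ : ℝ) (hΓ2 : f O ≤ Γ / a)
    (J : ℕ) (τ : ℕ → ℝ)
    (hτ : ∀ j, 1 ≤ j → j ≤ J → τ j = Γ / (a * k) * (1 - ε) ^ (j - 1))
    (S : ℕ → Finset α) (hS0 : S 0 = ∅)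
    (hchain : ∀ j, 1 ≤ j → j ≤ J → S (j - 1) ⊆ S j)
    (hadd : ∀ j, 1 ≤ j → j ≤ J → ∃ l : List α, l.Nodup ∧ l.toFinset = S j \ S (j - 1) ∧
      ∀ i : Fin l.length,
        τ j ≤ f (insert (l.get i) (S (j - 1) ∪ (l.take (i : ℕ)).toFinset)) -
          f (S (j - 1) ∪ (l.take (i : ℕ)).toFinset))
    (hthresh : ∀ j, 2 ≤ j → j ≤ J → S j ≠ S (j - 1) →
      ∀ o ∈ O, o ∉ S (j - 1) →
        f (insert o (S (j - 1))) - f (S (j - 1)) < τ (j - 1))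
    (hfull : (S J).card = k) :
    (1 - 1 / Real.exp 1 - ε) * f O ≤ f (S J) := by
  have hk' : 1 - ε ≤ k := by linarith [(Nat.one_le_cast (α := ℝ)).2 hk]
  have hrate : 0 ≤ 1 - (1 - ε) / k := by
    rw [sub_nonneg, div_le_one (by positivity)]; exact hk'
  have hgap := sub_le_pow_card_mul_of_rounds hrate J τ S hS0 hchain hadd
    fun j hj1 hjJ hne T hT => thresholdGreedy_round_bound hnn hmono hsub hε.le hε1.le hO hΓ2
      hτ hthresh hj1 hjJ hne hT
  rw [hfull, hf0, sub_zero] at hgap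
  have hpow := one_sub_div_pow_le_inv_exp_one_add hε.le hε1.le hk'
  linarith [mul_le_mul_of_nonneg_right hpow (hnn O)]

/-- The ThresholdGreedy guarantee when the constraint is filled:
`f` non-negative, monotone, submodular with `f ∅ = 0`; `k ≥ 1`, `ε ∈ (0,1)`,
`α ∈ (0,1]`, `|O| ≤ k`, `Γ ≤ f(O) ≤ Γ/α`, thresholds `τ j = (Γ/(αk))·(1−ε)^(j−1)`
for `j = 1, …, J`. The chain `∅ = S 0 ⊆ … ⊆ S J` is built so that (i) the elements of
`S j \ S (j−1)` can be ordered so that each is added with marginal gain at least `τ j`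
with respect to all previously added elements; (ii) for every `j ≥ 2` with
`S j ≠ S (j−1)`, every `o ∈ O \ S (j−1)` has marginal gain below `τ (j−1)`; and
(iii) `|S J| = k`. Then `f (S J) ≥ (1 − 1/e − ε)·f(O)`. -/
theorem stmt10 {α : Type*} [DecidableEq α] (f : Finset α → ℝ)
    (hnn : ∀ A : Finset α, 0 ≤ f A)
    (hmono : ∀ A B : Finset α, A ⊆ B → f A ≤ f B)
    (hsub : Submodular f) (hf0 : f ∅ = 0)
    (k : ℕ) (hk : 1 ≤ k)
    (ε : ℝ) (hε : 0 < ε) (hε1 : ε < 1)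
    (a : ℝ) (ha : 0 < a) (ha1 : a ≤ 1)
    (O : Finset α) (hO : O.card ≤ k)
    (Γ : ℝ) (hΓ : Γ ≤ f O) (hΓ2 : f O ≤ Γ / a)
    (J : ℕ) (τ : ℕ → ℝ)
    (hτ : ∀ j, 1 ≤ j → j ≤ J → τ j = Γ / (a * k) * (1 - ε) ^ (j - 1))
    (S : ℕ → Finset α) (hS0 : S 0 = ∅)
    (hchain : ∀ j, 1 ≤ j → j ≤ J → S (j - 1) ⊆ S j)
    (hadd : ∀ j, 1 ≤ j → j ≤ J → ∃ l : List α, l.Nodup ∧ l.toFinset = S j \ S (j - 1) ∧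
      ∀ i : Fin l.length,
        τ j ≤ f (insert (l.get i) (S (j - 1) ∪ (l.take (i : ℕ)).toFinset)) -
          f (S (j - 1) ∪ (l.take (i : ℕ)).toFinset))
    (hthresh : ∀ j, 2 ≤ j → j ≤ J → S j ≠ S (j - 1) →
      ∀ o ∈ O, o ∉ S (j - 1) →
        f (insert o (S (j - 1))) - f (S (j - 1)) < τ (j - 1))
    (hfull : (S J).card = k) :
    (1 - 1 / Real.exp 1 - ε) * f O ≤ f (S J) :=
  stmt10_general f hnn hmono hsub hf0 k hk ε hε hε1 a O hO Γ hΓ2 J τ hτ S hS0 hchain hadd hthresh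
    hfull
end

section
/- Let ε ∈ (0, 1), let k > 0 be a real number, and let n_1, …, n_r be non-negative real numbers with Σ_{j=1}^r n_j = k. Then Π_{j=1}^r (1 − (1 − ε)·n_j/k) ≤ e^{ε − 1} ≤ 1/e + ε. -/
/-! Each factor satisfies `0 ≤ 1 - a ≤ exp (-a)`, and the `a`'s sum to `1 - ε`, so the product is at
most `exp (ε - 1)`. The second inequality is convexity of `exp` on the segment `[-1, 0]`. -/

open Finset

namespace Real

theorem prod_one_sub_le_exp_neg_sum {ι : Type*} (s : Finset ι) (a : ι → ℝ)
    (ha : ∀ i ∈ s, a i ≤ 1) : ∏ i ∈ s, (1 - a i) ≤ exp (-∑ i ∈ s, a i) := by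
  rw [← sum_neg_distrib, exp_sum]
  exact prod_le_prod (fun i hi => sub_nonneg.2 (ha i hi)) fun i _ => one_sub_le_exp_neg (a i)

theorem exp_sub_one_le_exp_neg_one_add {ε : ℝ} (h0 : 0 ≤ ε) (h1 : ε ≤ 1) :
    exp (ε - 1) ≤ exp (-1) + ε :=
  calc exp (ε - 1) = exp ((1 - ε) • (-1 : ℝ) + ε • (0 : ℝ)) := by
        rw [smul_eq_mul, smul_eq_mul]; ring_nf
    _ ≤ (1 - ε) • exp (-1) + ε • exp 0 :=
        convexOn_exp.2 (Set.mem_univ _) (Set.mem_univ _) (sub_nonneg.2 h1) h0 (by ring)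
    _ ≤ exp (-1) + ε := by
        rw [smul_eq_mul, smul_eq_mul, exp_zero, mul_one]
        nlinarith [exp_pos (-1)]

end Real

/-- Let `ε ∈ (0,1)`, `k > 0` real, and `n 1, …, n r` non-negative
reals summing to `k`. Then `Π_j (1 − (1−ε)·n j / k) ≤ e^{ε−1} ≤ 1/e + ε`. -/
theorem stmt11 (ε : ℝ) (hε : 0 < ε) (hε1 : ε < 1)
    (k : ℝ) (hk : 0 < k)
    (r : ℕ) (n : ℕ → ℝ)
    (hn : ∀ j ∈ Finset.range r, 0 ≤ n j)
    (hsum : ∑ j ∈ Finset.range r, n j = k) :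
    (∏ j ∈ Finset.range r, (1 - (1 - ε) * n j / k)) ≤ Real.exp (ε - 1) ∧
      Real.exp (ε - 1) ≤ 1 / Real.exp 1 + ε := by
  have hle : ∀ j ∈ range r, n j ≤ k := fun j hj => hsum ▸ single_le_sum hn hj
  have hweights : ∑ j ∈ range r, (1 - ε) * n j / k = 1 - ε := by
    rw [← sum_div, ← mul_sum, hsum, mul_div_cancel_right₀ _ hk.ne']
  refine ⟨?_, ?_⟩
  · calc ∏ j ∈ range r, (1 - (1 - ε) * n j / k)
        ≤ Real.exp (-∑ j ∈ range r, (1 - ε) * n j / k) :=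
          Real.prod_one_sub_le_exp_neg_sum _ _ fun j hj => by
            rw [div_le_one hk]; nlinarith [hn j hj, hle j hj]
      _ = Real.exp (ε - 1) := by rw [hweights, neg_sub]
  · rw [one_div, ← Real.exp_neg]
    exact Real.exp_sub_one_le_exp_neg_one_add hε.le hε1.le
end

section
/- Let ε > 0 and let u be a natural number such that ⌈(1+ε)^u⌉ ≥ 1/ε. Then ⌈(1+ε)^u⌉ / ⌈(1+ε)^{u+1}⌉ ≥ 1/(1 + 2ε). -/
/- Writing `x = (1+ε)^u` and `a = ⌈x⌉`, the next grid point satisfies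
`⌈(1+ε)x⌉ < (1+ε)x + 1 ≤ (1+ε)a + εa = (1+2ε)a`, where `1 ≤ εa` absorbs the rounding error. -/

theorem Nat.ceil_one_add_mul_lt {x ε : ℝ} (hx : 0 ≤ x) (hε : 0 ≤ ε)
    (h : 1 ≤ ε * ⌈x⌉₊) : (⌈(1 + ε) * x⌉₊ : ℝ) < (1 + 2 * ε) * ⌈x⌉₊ :=
  calc (⌈(1 + ε) * x⌉₊ : ℝ) < (1 + ε) * x + 1 := Nat.ceil_lt_add_one (by positivity)
    _ ≤ (1 + ε) * ⌈x⌉₊ + ε * ⌈x⌉₊ := by gcongr; exact Nat.le_ceil x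
    _ = (1 + 2 * ε) * ⌈x⌉₊ := by ring

/-- Let `ε > 0` and `u` a natural number with `⌈(1+ε)^u⌉ ≥ 1/ε`.
Then `⌈(1+ε)^u⌉ / ⌈(1+ε)^(u+1)⌉ ≥ 1/(1 + 2ε)`. -/
theorem stmt13 (ε : ℝ) (hε : 0 < ε) (u : ℕ)
    (h : 1 / ε ≤ (⌈(1 + ε) ^ u⌉₊ : ℝ)) :
    1 / (1 + 2 * ε) ≤ (⌈(1 + ε) ^ u⌉₊ : ℝ) / (⌈(1 + ε) ^ (u + 1)⌉₊ : ℝ) := by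
  have h_one_le : 1 ≤ ε * ⌈(1 + ε) ^ u⌉₊ := by
    rwa [div_le_iff₀' hε] at h
  have h_next_pos : (0 : ℝ) < ⌈(1 + ε) ^ (u + 1)⌉₊ := by
    exact_mod_cast Nat.ceil_pos.mpr (by positivity)
  have h_next_lt := Nat.ceil_one_add_mul_lt (by positivity) hε.le h_one_le
  rw [← pow_succ'] at h_next_lt
  rw [div_le_div_iff₀ (by positivity) h_next_pos]
  linarith
end

section
/- Let N be a finite ground set, let f : 2^N → ℝ be monotone with f(∅) ≥ 0, let τ ≥ 0 and ε ∈ (0, 1). Suppose ∅ = U_0 ⊆ U_1 ⊆ … ⊆ U_r = S is a chain of subsets of N such that for each 1 ≤ j ≤ r, writing B_j = U_j \ U_{j−1}, either (i) f(U_j) − f(U_{j−1}) ≥ (1 − ε)·τ·|B_j|, or (ii) there exists D_j ⊆ B_j with |D_j| ≥ |B_j|/(1 + 2ε) and f(U_{j−1} ∪ D_j) − f(U_{j−1}) ≥ (1 − ε)·τ·|D_j|. Then f(S) ≥ (1 − ε)·τ·|S| / (1 + 2ε). -/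
/-!
Every block `B = U (j+1) \ U j` gains at least `c / (1 + 2ε) · |B|` with `c = (1 - ε)τ`: in case (ii)
monotonicity passes the gain of the sub-prefix `D` on to the whole block, and `|D| ≥ |B| / (1 + 2ε)`;
case (i) is case (ii) with `D = B`. Summing these gains along the chain and using `f ∅ ≥ 0` gives
the bound.
-/

open Finset

section

variable {α : Type*} [DecidableEq α] {f : Finset α → ℝ}

theorem div_mul_card_sdiff_le_sub_of_subset_gain (hf : Monotone f) {c q : ℝ} (hq : 0 < q)
    {A B D : Finset α} (hAB : A ⊆ B) (hD : D ⊆ B \ A) (hcard : (#(B \ A) : ℝ) / q ≤ #D)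
    (hgain : c * #D ≤ f (A ∪ D) - f A) :
    c / q * #(B \ A) ≤ f B - f A := by
  have hAD : f (A ∪ D) ≤ f B := hf (union_subset hAB (hD.trans sdiff_subset))
  rcases le_or_gt 0 c with hc | hc
  · calc c / q * #(B \ A) = c * (#(B \ A) / q) := by ring
      _ ≤ c * #D := mul_le_mul_of_nonneg_left hcard hc
      _ ≤ f B - f A := by linarith
  · have hBA : f A ≤ f B := hf hAB
    have : c / q * #(B \ A) ≤ 0 :=
      mul_nonpos_of_nonpos_of_nonneg (div_nonpos_of_nonpos_of_nonneg hc.le hq.le) (Nat.cast_nonneg _)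
    linarith

theorem div_mul_card_sdiff_le_sub_of_block_gain (hf : Monotone f) {c q : ℝ} (hq : 1 ≤ q)
    {A B : Finset α} (hAB : A ⊆ B)
    (hblock : c * #(B \ A) ≤ f B - f A ∨
      ∃ D ⊆ B \ A, (#(B \ A) : ℝ) / q ≤ #D ∧ c * #D ≤ f (A ∪ D) - f A) :
    c / q * #(B \ A) ≤ f B - f A := by
  have hq0 : 0 < q := by linarith
  rcases hblock with hwhole | ⟨D, hD, hcard, hgain⟩
  · refine div_mul_card_sdiff_le_sub_of_subset_gain hf hq0 hAB subset_rfl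
      (div_le_self (Nat.cast_nonneg _) hq) ?_
    rwa [union_sdiff_of_subset hAB]
  · exact div_mul_card_sdiff_le_sub_of_subset_gain hf hq0 hAB hD hcard hgain

theorem mul_card_sub_le_sub_of_forall_step {c : ℝ} {U : ℕ → Finset α} {r : ℕ}
    (hchain : ∀ j < r, U j ⊆ U (j + 1))
    (hstep : ∀ j < r, c * #(U (j + 1) \ U j) ≤ f (U (j + 1)) - f (U j)) :
    c * ((#(U r) : ℝ) - #(U 0)) ≤ f (U r) - f (U 0) := by
  induction r with
  | zero => simp
  | succ r ih =>
    have hprev := ih (fun j hj => hchain j (by omega)) (fun j hj => hstep j (by omega))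
    have hlast := hstep r r.lt_succ_self
    have hcard : (#(U (r + 1)) : ℝ) = #(U (r + 1) \ U r) + #(U r) := by
      exact_mod_cast (card_sdiff_add_card_eq_card (hchain r r.lt_succ_self)).symm
    rw [hcard]
    linarith

end

theorem stmt14_general {α : Type*} [DecidableEq α] (f : Finset α → ℝ)
    (hmono : ∀ A B : Finset α, A ⊆ B → f A ≤ f B) (hf0 : 0 ≤ f ∅)
    (τ : ℝ) (ε : ℝ) (hε : 0 < ε)
    (r : ℕ) (U : ℕ → Finset α) (hU0 : U 0 = ∅)
    (hchain : ∀ j < r, U j ⊆ U (j + 1))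
    (hblock : ∀ j < r,
      (1 - ε) * τ * ((U (j + 1) \ U j).card : ℝ) ≤ f (U (j + 1)) - f (U j) ∨
      ∃ D ⊆ U (j + 1) \ U j,
        ((U (j + 1) \ U j).card : ℝ) / (1 + 2 * ε) ≤ (D.card : ℝ) ∧
        (1 - ε) * τ * (D.card : ℝ) ≤ f (U j ∪ D) - f (U j)) :
    (1 - ε) * τ * ((U r).card : ℝ) / (1 + 2 * ε) ≤ f (U r) := by
  have hq : (1 : ℝ) ≤ 1 + 2 * ε := by linarith
  have htotal := mul_card_sub_le_sub_of_forall_step hchain fun j hj =>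
    div_mul_card_sdiff_le_sub_of_block_gain (fun A B => hmono A B) hq (hchain j hj) (hblock j hj)
  rw [hU0, card_empty, Nat.cast_zero, sub_zero] at htotal
  rw [mul_div_right_comm]
  linarith

/-- Let `f` be monotone with `f ∅ ≥ 0`, `τ ≥ 0`, `ε ∈ (0,1)`, and
`∅ = U 0 ⊆ U 1 ⊆ … ⊆ U r = S` a chain such that for each step, with block
`B = U (j+1) \ U j`, either the whole block has gain at least `(1−ε)·τ·|B|`, or some
`D ⊆ B` with `|D| ≥ |B|/(1+2ε)` has gain at least `(1−ε)·τ·|D|` over `U j`.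
Then `f(S) ≥ (1−ε)·τ·|S|/(1+2ε)`. -/
theorem stmt14 {α : Type*} [DecidableEq α] (f : Finset α → ℝ)
    (hmono : ∀ A B : Finset α, A ⊆ B → f A ≤ f B) (hf0 : 0 ≤ f ∅)
    (τ : ℝ) (hτ : 0 ≤ τ) (ε : ℝ) (hε : 0 < ε) (hε1 : ε < 1)
    (r : ℕ) (U : ℕ → Finset α) (hU0 : U 0 = ∅)
    (hchain : ∀ j < r, U j ⊆ U (j + 1))
    (hblock : ∀ j < r,
      (1 - ε) * τ * ((U (j + 1) \ U j).card : ℝ) ≤ f (U (j + 1)) - f (U j) ∨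
      ∃ D ⊆ U (j + 1) \ U j,
        ((U (j + 1) \ U j).card : ℝ) / (1 + 2 * ε) ≤ (D.card : ℝ) ∧
        (1 - ε) * τ * (D.card : ℝ) ≤ f (U j ∪ D) - f (U j)) :
    (1 - ε) * τ * ((U r).card : ℝ) / (1 + 2 * ε) ≤ f (U r) :=
  stmt14_general f hmono hf0 τ ε hε r U hU0 hchain hblock
end
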